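/- Let δ ∈ ℝ with 1 < δ < 2 and let α₀ ≥ 1/(δ−1). Then for all integers N ≥ 3 and j with 2 ≤ j ≤ N−1, ( (j−1)^{2−δ} − (j−2)^{2−δ} ) / ( j^{2−δ} − (j−1)^{2−δ} ) > 1 + 1/(N α₀ + 1). Equivalently, with d_r := r^{2−δ} − (r−1)^{2−δ} and h = 1/N, one has d_j · (1 + h/(h+α₀)) − d_{j−1} < 0. -/
import Mathlib

open intervalIntegral MeasureTheory Real

lemma ptwise {β x t : ℝ} (hβ0 : 0 < β) (hβ1 : β < 1) (hx : 2 ≤ x)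
    (ht1 : 1 < t) (htx : t ≤ x) :
    (1 + (1 - β) / x) * t ^ (β - 1) ≤ (t - 1) ^ (β - 1) := by
  have hx0 : (0:ℝ) < x := by linarith
  have ht0 : (0:ℝ) < t := by linarith
  have htm : (0:ℝ) < t - 1 := by linarith
  set q : ℝ := 1 - β with hq
  have hq0 : 0 < q := by simp only [hq]; linarith
  have hq1 : q ≤ 1 := by simp only [hq]; linarith
  have h1 : (t - 1) ^ q ≤ (1 - q / t) * t ^ q := by
    have hB := rpow_one_add_le_one_add_mul_self (s := -(1/t))
      (by rw [neg_le_neg_iff]; rw [div_le_one ht0]; linarith) hq0.le hq1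
    have he : 1 + -(1/t) = (t-1)/t := by field_simp; ring
    rw [he, Real.div_rpow htm.le ht0.le, div_le_iff₀ (rpow_pos_of_pos ht0 q)] at hB
    calc (t-1)^q ≤ (1 + q * -(1/t)) * t ^ q := hB
      _ = (1 - q / t) * t ^ q := by ring
  have hcoef : (1 + q/x) * (1 - q/t) ≤ 1 := by
    have hqt : q/x ≤ q/t := div_le_div_of_nonneg_left hq0.le ht0 htx
    have h2 : 0 ≤ (q/x) * (q/t) := by positivity
    nlinarith
  have key : (1 + q/x) * (t-1)^q ≤ t^q := by
    have hpos : (0:ℝ) < 1 + q/x := by positivity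
    have htqpos : (0:ℝ) < t^q := rpow_pos_of_pos ht0 q
    nlinarith [mul_le_mul_of_nonneg_left h1 hpos.le]
  have hbq : β - 1 = -q := by simp only [hq]; ring
  rw [hbq, Real.rpow_neg ht0.le, Real.rpow_neg htm.le, inv_eq_one_div, inv_eq_one_div,
    mul_one_div, div_le_div_iff₀ (rpow_pos_of_pos ht0 q) (rpow_pos_of_pos htm q)]
  calc (1 + (1-β)/x) * (t-1)^q = (1 + q/x) * (t-1)^q := by rw [hq]
    _ ≤ t^q := key
    _ = 1 * t^q := by ring

/-- Integral step: `(1+(1-β)/x)·(x^β−(x−1)^β) ≤ (x−1)^β−(x−2)^β`. -/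
lemma keyineq {β x : ℝ} (hβ0 : 0 < β) (hβ1 : β < 1) (hx : 2 ≤ x) :
    (1 + (1 - β) / x) * (x ^ β - (x - 1) ^ β) ≤ (x - 1) ^ β - (x - 2) ^ β := by
  have hβm : (-1:ℝ) < β - 1 := by linarith
  have hI1 : ∫ t in (x-1)..x, t ^ (β-1) = (x ^ β - (x-1) ^ β) / β := by
    rw [integral_rpow (Or.inl hβm)]
    norm_num
  have hI2 : ∫ t in (x-2)..(x-1), t ^ (β-1) = ((x-1) ^ β - (x-2) ^ β) / β := by
    rw [integral_rpow (Or.inl hβm)]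
    norm_num
  have hsub : (∫ t in (x-1)..x, (t - 1) ^ (β-1)) = ∫ t in (x-2)..(x-1), t ^ (β-1) := by
    rw [intervalIntegral.integral_comp_sub_right (fun t => t ^ (β-1)) 1]
    have e : x - 1 - 1 = x - 2 := by ring
    rw [e]
  have hintf : IntervalIntegrable (fun t : ℝ => (1 + (1-β)/x) * t ^ (β-1)) volume (x-1) x :=
    (intervalIntegral.intervalIntegrable_rpow' hβm).const_mul _
  have hintg : IntervalIntegrable (fun t : ℝ => (t - 1) ^ (β-1)) volume (x-1) x := by
    have h2 := (intervalIntegral.intervalIntegrable_rpow' hβm (a := x-2) (b := x-1)).comp_sub_right 1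
    have e1 : x - 2 + 1 = x - 1 := by ring
    have e2 : x - 1 + 1 = x := by ring
    rwa [e1, e2] at h2
  have hle : x - 1 ≤ x := by linarith
  have hmono : (∫ t in (x-1)..x, (1 + (1-β)/x) * t ^ (β-1))
      ≤ ∫ t in (x-1)..x, (t - 1) ^ (β-1) := by
    rw [intervalIntegral.integral_of_le hle, intervalIntegral.integral_of_le hle]
    apply MeasureTheory.setIntegral_mono_on
      (hintf.1) (hintg.1) measurableSet_Ioc
    intro t ht
    exact ptwise hβ0 hβ1 hx (by have := ht.1; linarith) ht.2
  rw [intervalIntegral.integral_const_mul, hI1, hsub, hI2] at hmono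
  have hβpos : (0:ℝ) < β := hβ0
  rw [← mul_div_assoc, div_le_div_iff₀ hβpos hβpos] at hmono
  nlinarith



/-- The coefficients `d_r = r^{2−δ} − (r−1)^{2−δ}` (for integers `r ≥ 1`) of the
standard discretization of the Caputo derivative of order `δ ∈ (1,2)`. -/
noncomputable def dCoef (δ : ℝ) (r : ℕ) : ℝ :=
  (r:ℝ) ^ (2 - δ) - ((r:ℝ) - 1) ^ (2 - δ)

theorem stmt14 (δ α₀ : ℝ) (hδ1 : 1 < δ) (hδ2 : δ < 2) (hα₀ : 1 / (δ - 1) ≤ α₀) :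
    ∀ N : ℕ, 3 ≤ N → ∀ j : ℕ, 2 ≤ j → j ≤ N - 1 →
      1 + 1 / ((N:ℝ) * α₀ + 1)
        < (((j:ℝ) - 1) ^ (2 - δ) - ((j:ℝ) - 2) ^ (2 - δ))
            / ((j:ℝ) ^ (2 - δ) - ((j:ℝ) - 1) ^ (2 - δ)) ∧
      dCoef δ j * (1 + (1 / (N:ℝ)) / (1 / (N:ℝ) + α₀)) - dCoef δ (j - 1) < 0 := by
  intro N hN j hj2 hjN
  set β : ℝ := 2 - δ with hβ
  have hβ0 : 0 < β := by simp only [hβ]; linarith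
  have hβ1 : β < 1 := by simp only [hβ]; linarith
  set x : ℝ := (j:ℝ) with hxj
  have hx2 : (2:ℝ) ≤ x := by simp only [hxj]; exact_mod_cast hj2
  have hδm : 0 < δ - 1 := by linarith
  have hα₀pos : 0 < α₀ := lt_of_lt_of_le (by positivity) hα₀
  have hNpos : (0:ℝ) < N := by positivity
  have hNx : x ≤ (N:ℝ) - 1 := by
    have : (j:ℝ) ≤ ((N - 1 : ℕ):ℝ) := by exact_mod_cast hjN
    rwa [Nat.cast_sub (by omega), Nat.cast_one] at this
  have hN3 : (3:ℝ) ≤ (N:ℝ) := by exact_mod_cast hN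
  -- positivity of d_j
  have hdj : 0 < x ^ β - (x - 1) ^ β := by
    have := Real.rpow_lt_rpow (x := x - 1) (y := x) (by linarith) (by linarith) hβ0
    linarith
  -- key inequality
  have hkey : (1 + (1 - β) / x) * (x ^ β - (x - 1) ^ β) ≤ (x - 1) ^ β - (x - 2) ^ β :=
    keyineq hβ0 hβ1 hx2
  have h1β : 1 - β = δ - 1 := by simp only [hβ]; ring
  -- strict scalar inequality: 1/(Nα₀+1) < (δ-1)/x
  have hden : (0:ℝ) < (N:ℝ) * α₀ + 1 := by positivity
  have hscal : 1 / ((N:ℝ) * α₀ + 1) < (δ - 1) / x := by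
    rw [div_lt_div_iff₀ hden (by linarith)]
    have hNα : (N:ℝ) ≤ (δ - 1) * ((N:ℝ) * α₀) := by
      have := mul_le_mul_of_nonneg_left hα₀ (by positivity : (0:ℝ) ≤ (δ - 1) * (N:ℝ))
      calc (N:ℝ) = (δ - 1) * (N:ℝ) * (1 / (δ - 1)) := by field_simp
        _ ≤ (δ - 1) * (N:ℝ) * α₀ := this
        _ = (δ - 1) * ((N:ℝ) * α₀) := by ring
    nlinarith
  have hchain : (1 + 1 / ((N:ℝ) * α₀ + 1)) * (x ^ β - (x - 1) ^ β)
      < (x - 1) ^ β - (x - 2) ^ β := by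
    have : 1 + 1 / ((N:ℝ) * α₀ + 1) < 1 + (1 - β) / x := by rw [h1β]; linarith
    nlinarith
  constructor
  · rw [lt_div_iff₀ hdj]
    exact hchain
  · -- rewrite the casts in dCoef
    have hc1 : ((j - 1 : ℕ):ℝ) = x - 1 := by
      rw [Nat.cast_sub (by omega), Nat.cast_one]
    have hd1 : dCoef δ j = x ^ β - (x - 1) ^ β := rfl
    have hd2 : dCoef δ (j - 1) = (x - 1) ^ β - (x - 2) ^ β := by
      unfold dCoef
      rw [hc1]
      norm_num
      rw [show x - 1 - 1 = x - 2 by ring]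
    have hfrac : 1 + (1 / (N:ℝ)) / (1 / (N:ℝ) + α₀) = 1 + 1 / ((N:ℝ) * α₀ + 1) := by
      have h1 : (1:ℝ) / (N:ℝ) + α₀ ≠ 0 := by positivity
      field_simp
      ring
    rw [hd1, hd2, hfrac]
    linarith
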